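/- Consider rooted trees for semi-linear SDEs, built from node types •_m for m ∈ {0,1,…,M} (nonlinear nodes), •_A (linear nodes) and •_t (time nodes), subject to: •_t nodes are always leaves, and every •_A node has at most one child whose root is not a •_t node (all its other children are •_t leaves); children of •_m nodes are arbitrary trees of this class (including •_t leaves). Let T̄_A denote the collection of such trees containing no •_m node (the empty tree ∅ is included in T̄_A), and let T_g denote the collection of such nonempty trees whose root is a •_m node. Then for every tree τ of this class there is at most one pair (ϑ, {δ}) ∈ SP(τ) with ϑ ∈ T̄_A and δ ∈ T_g. -/
import Mathlib


/-- Node types for the trees associated with semi-linear SDEs: nonlinear nodes `•_m`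
with `m ∈ {0,1,…,M}`, linear nodes `•_A`, and time nodes `•_t`. -/
inductive NodeType (M : ℕ) : Type where
  | g (m : Fin (M + 1)) : NodeType M
  | A : NodeType M
  | t : NodeType M
deriving DecidableEq

/-- Rooted trees with nodes labelled by `NodeType M`. -/
inductive ETree (M : ℕ) : Type where
  | node (l : NodeType M) (ts : List (ETree M)) : ETree M

/-- The label of the root of a tree. -/
def ETree.rootLabel {M : ℕ} : ETree M → NodeType M
  | .node l _ => l

/-- The trees of the class under consideration: `•_t` nodes are always leaves, every
`•_A` node has at most one child whose root is not a `•_t` node (all its other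
children are `•_t` leaves), and children of `•_m` nodes are arbitrary trees of the
class (including `•_t` leaves). -/
inductive ETree.WF {M : ℕ} : ETree M → Prop
  | t_leaf : ETree.WF (.node .t [])
  | A_node (ts : List (ETree M)) :
      (∀ τ ∈ ts, ETree.WF τ) →
      (ts.countP fun τ => decide (τ.rootLabel ≠ NodeType.t)) ≤ 1 →
      ETree.WF (.node .A ts)
  | g_node (m : Fin (M + 1)) (ts : List (ETree M)) :
      (∀ τ ∈ ts, ETree.WF τ) → ETree.WF (.node (.g m) ts)

/-- A tree contains no `•_m` node. -/
inductive ETree.NoG {M : ℕ} : ETree M → Prop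
  | mk (l : NodeType M) (ts : List (ETree M)) :
      (∀ m, l ≠ .g m) → (∀ τ ∈ ts, ETree.NoG τ) → ETree.NoG (.node l ts)

/-- Membership in `T̄_A`, the collection of trees of the class with no `•_m` node;
the empty tree (encoded as `none`) belongs to `T̄_A`. -/
def memTbarA {M : ℕ} : Option (ETree M) → Prop
  | none => True
  | some ϑ => ϑ.NoG

/-- Membership in `T_g`, the collection of nonempty trees whose root is a `•_m` node. -/
def ETree.memTg {M : ℕ} (τ : ETree M) : Prop :=
  ∃ m, τ.rootLabel = NodeType.g m

mutual
/-- All ways of cutting out of `τ` the full subtree `σ` hanging below some non-root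
vertex of `τ`: returns the list of the pairs `(τ∖σ, σ)`, where `τ∖σ` is `τ` with `σ`
deleted. -/
def ETree.cuts {M : ℕ} : ETree M → List (ETree M × ETree M)
  | .node l ts => (ETree.cutsList ts).map fun p => (.node l p.1, p.2)

/-- Helper for `ETree.cuts`, acting on a list of sibling subtrees. -/
def ETree.cutsList {M : ℕ} : List (ETree M) → List (List (ETree M) × ETree M)
  | [] => []
  | t :: ts =>
      ((ts, t) :: (ETree.cuts t).map fun p => (p.1 :: ts, p.2)) ++
        (ETree.cutsList ts).map fun p => (t :: p.1, p.2)
end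

/-- `SP(τ)`: the set of pairs `(ϑ, δ)` consisting of a rooted subtree `ϑ` of `τ`
sharing the root of `τ` (possibly empty, encoded as `none`) together with a remainder
consisting of exactly one nonempty tree `δ`; i.e.
`SP(τ) = {(∅, τ)} ∪ {(τ∖σ, σ) : σ a full subtree below a non-root vertex of τ}`,
with identical pairs identified. -/
def ETree.SP {M : ℕ} (τ : ETree M) : Set (Option (ETree M) × ETree M) :=
  insert ((none : Option (ETree M)), τ)
    {p | ∃ c ∈ τ.cuts, p = ((some c.1 : Option (ETree M)), c.2)}

lemma ETree.noG_rootLabel {M : ℕ} {τ : ETree M} (h : τ.NoG) :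
    ∀ m, τ.rootLabel ≠ NodeType.g m := by
  cases h with
  | mk l ts hl _ => exact hl

lemma ETree.noG_not_memTg {M : ℕ} {τ : ETree M} (h : τ.NoG) : ¬ τ.memTg := by
  rintro ⟨m, hm⟩
  exact ETree.noG_rootLabel h m hm

lemma ETree.cuts_rootLabel {M : ℕ} (τ : ETree M) :
    ∀ c ∈ τ.cuts, c.1.rootLabel = τ.rootLabel := by
  cases τ with
  | node l ts =>
    intro c hc
    simp only [ETree.cuts, List.mem_map] at hc
    obtain ⟨p, _, rfl⟩ := hc
    rfl

lemma ETree.noG_inv {M : ℕ} {l : NodeType M} {ts : List (ETree M)}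
    (h : (ETree.node l ts).NoG) : (∀ m, l ≠ .g m) ∧ ∀ τ ∈ ts, ETree.NoG τ := by
  cases h with
  | mk l ts hl hts => exact ⟨hl, hts⟩

mutual
theorem ETree.noG_cuts {M : ℕ} : ∀ (τ : ETree M), τ.NoG → ∀ c ∈ τ.cuts, c.2.NoG
  | .node l ts, h, c, hc => by
    simp only [ETree.cuts, List.mem_map] at hc
    obtain ⟨p, hp, rfl⟩ := hc
    exact ETree.noG_cutsList ts (ETree.noG_inv h).2 p hp

theorem ETree.noG_cutsList {M : ℕ} : ∀ (ts : List (ETree M)),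
    (∀ t ∈ ts, t.NoG) → ∀ c ∈ ETree.cutsList ts, c.2.NoG
  | [], _, c, hc => by simp [ETree.cutsList] at hc
  | t :: ts, h, c, hc => by
    simp only [ETree.cutsList, List.mem_append, List.mem_cons, List.mem_map] at hc
    rcases hc with (rfl | ⟨p, hp, rfl⟩) | ⟨p, hp, rfl⟩
    · exact h t (by simp)
    · exact ETree.noG_cuts t (h t (by simp)) p hp
    · exact ETree.noG_cutsList ts (fun x hx => h x (by simp [hx])) p hp
end

mutual
theorem ETree.cuts_unique {M : ℕ} : ∀ (τ : ETree M), ∀ c₁ ∈ τ.cuts, ∀ c₂ ∈ τ.cuts,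
    c₁.1.NoG → c₁.2.memTg → c₂.1.NoG → c₂.2.memTg → c₁ = c₂
  | .node l ts, c₁, hc₁, c₂, hc₂, h₁, h₁', h₂, h₂' => by
    simp only [ETree.cuts, List.mem_map] at hc₁ hc₂
    obtain ⟨p, hp, rfl⟩ := hc₁
    obtain ⟨q, hq, rfl⟩ := hc₂
    have := ETree.cutsList_unique ts p hp q hq (ETree.noG_inv h₁).2 h₁'
      (ETree.noG_inv h₂).2 h₂'
    rw [this]

theorem ETree.cutsList_unique {M : ℕ} : ∀ (ts : List (ETree M)),
    ∀ c₁ ∈ ETree.cutsList ts, ∀ c₂ ∈ ETree.cutsList ts,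
    (∀ x ∈ c₁.1, x.NoG) → c₁.2.memTg → (∀ x ∈ c₂.1, x.NoG) → c₂.2.memTg → c₁ = c₂
  | [], c₁, hc₁, _, _, _, _, _, _ => by simp [ETree.cutsList] at hc₁
  | t :: ts, c₁, hc₁, c₂, hc₂, h₁, h₁', h₂, h₂' => by
    simp only [ETree.cutsList, List.mem_append, List.mem_cons, List.mem_map] at hc₁ hc₂
    rcases hc₁ with (rfl | ⟨p, hp, rfl⟩) | ⟨p, hp, rfl⟩ <;>
      rcases hc₂ with (rfl | ⟨q, hq, rfl⟩) | ⟨q, hq, rfl⟩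
    · rfl
    · -- c₁ = (ts, t), c₂ = (q.1 :: ts, q.2) with q ∈ cuts t
      exfalso
      obtain ⟨m, hm⟩ := h₁'
      have hq1 : q.1.rootLabel = t.rootLabel := ETree.cuts_rootLabel t q hq
      exact ETree.noG_rootLabel (h₂ q.1 (by simp)) m (by rw [hq1, hm])
    · -- c₂ = (t :: q.1, q.2), needs NoG t but t memTg
      exact absurd h₁' (ETree.noG_not_memTg (h₂ t (by simp)))
    · exfalso
      obtain ⟨m, hm⟩ := h₂'
      have hp1 : p.1.rootLabel = t.rootLabel := ETree.cuts_rootLabel t p hp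
      exact ETree.noG_rootLabel (h₁ p.1 (by simp)) m (by rw [hp1, hm])
    · have := ETree.cuts_unique t p hp q hq (h₁ p.1 (by simp)) h₁'
        (h₂ q.1 (by simp)) h₂'
      rw [this]
    · -- c₁ = (p.1 :: ts, p.2) with p ∈ cuts t, c₂ = (t :: q.1, q.2): NoG t but p.2 ⊆ t memTg
      exact absurd h₁' (ETree.noG_not_memTg (ETree.noG_cuts t (h₂ t (by simp)) p hp))
    · exact absurd h₂' (ETree.noG_not_memTg (h₁ t (by simp)))
    · exact absurd h₂' (ETree.noG_not_memTg (ETree.noG_cuts t (h₁ t (by simp)) q hq))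
    · have := ETree.cutsList_unique ts p hp q hq (fun x hx => h₁ x (by simp [hx])) h₁'
        (fun x hx => h₂ x (by simp [hx])) h₂'
      rw [this]
end

/-- For every tree `τ` of the class of trees for semi-linear SDEs, there is at most
one pair `(ϑ, {δ}) ∈ SP(τ)` with `ϑ ∈ T̄_A` and `δ ∈ T_g`. -/
theorem subsingleton_SP_pair_TbarA_Tg {M : ℕ} (τ : ETree M) (hτ : τ.WF) :
    ∀ p₁ ∈ τ.SP, ∀ p₂ ∈ τ.SP,
      memTbarA p₁.1 → p₁.2.memTg → memTbarA p₂.1 → p₂.2.memTg → p₁ = p₂ := by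
  intro p₁ hp₁ p₂ hp₂ h₁ h₁' h₂ h₂'
  simp only [ETree.SP, Set.mem_insert_iff, Set.mem_setOf_eq] at hp₁ hp₂
  rcases hp₁ with rfl | ⟨c₁, hc₁, rfl⟩ <;> rcases hp₂ with rfl | ⟨c₂, hc₂, rfl⟩
  · rfl
  · exfalso
    obtain ⟨m, hm⟩ := h₁'
    have := ETree.cuts_rootLabel τ c₂ hc₂
    exact ETree.noG_rootLabel h₂ m (by rw [this, hm])
  · exfalso
    obtain ⟨m, hm⟩ := h₂'
    have := ETree.cuts_rootLabel τ c₁ hc₁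
    exact ETree.noG_rootLabel h₁ m (by rw [this, hm])
  · have := ETree.cuts_unique τ c₁ hc₁ c₂ hc₂ h₁ h₁' h₂ h₂'
    rw [this]
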